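/- Let d ≥ 1 and let q : ℝ^d × ℝ^d → ℂ with Re q ≥ 0 satisfy: (a) for every x ∈ ℝ^d the functions ξ ↦ √|q(x,ξ)| and ξ ↦ √(Re q(x,ξ)) are subadditive on ℝ^d, and |q(x,−ξ)| = |q(x,ξ)| and Re q(x,−ξ) = Re q(x,ξ) for all ξ; (b) sup_{x∈ℝ^d} |q(x,ξ)| → 0 as ξ → 0; (c) the functions S(ξ) := sup_{x∈ℝ^d} |q(x,ξ)| and I(ξ) := inf_{x∈ℝ^d} Re q(x,ξ) are Borel measurable and radial, i.e. they depend on ξ only through |ξ|; (d) ξ ↦ √(I(ξ)) is subadditive on ℝ^d. Then: if ∫_{{|ξ|<r}} dξ / S(ξ) = ∞ holds for some r > 0, it holds for every r > 0; and if ∫_{{|ξ|<r}} dξ / I(ξ) < ∞ holds for some r > 0, it holds for every r > 0. -/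

import Mathlib

/-!
Let `F` be `S` or `I`. Since `√F` is subadditive and tends to `0` at the origin, `F` is
continuous. On a closed ball of radius `ρ` around any point, `F` attains its minimum at some `b`.
If `F b > 0`, then `1/F` is bounded on that ball. If `F b = 0`, then evenness and subadditivity
give `F (ξ - b) ≤ F ξ`, so the integral of `1/F` over the ball is at most its integral over the
ball of radius `2ρ` around the origin. Hence finiteness of `∫ 1/F` near the origin makes `1/F`
locally integrable, and so integrable over every ball. The divergence statement for `S` is the
contrapositive, and `I ≤ S` supplies the continuity of `I` at the origin.
-/

open MeasureTheory Filter Topology Metric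
open scoped ENNReal

theorem ENNReal.continuous_of_subadditive {G : Type*} [TopologicalSpace G] [AddGroup G]
    [IsTopologicalAddGroup G] {g : G → ℝ≥0∞} (hsub : ∀ x y, g (x + y) ≤ g x + g y)
    (hg : Tendsto g (𝓝 0) (𝓝 0)) : Continuous g := by
  refine continuous_iff_continuousAt.2 fun x => ?_
  have hleft : Tendsto (fun y => x - y) (𝓝 x) (𝓝 0) := by
    simpa using (tendsto_id (x := 𝓝 x)).const_sub x
  have hright : Tendsto (fun y => y - x) (𝓝 x) (𝓝 0) := by
    simpa using (tendsto_id (x := 𝓝 x)).sub_const x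
  have hlower : Tendsto (fun y => g x - g (x - y)) (𝓝 x) (𝓝 (g x)) := by
    simpa using ENNReal.Tendsto.sub tendsto_const_nhds (hg.comp hleft) (.inr ENNReal.zero_ne_top)
  have hupper : Tendsto (fun y => g x + g (y - x)) (𝓝 x) (𝓝 (g x)) := by
    simpa using tendsto_const_nhds.add (hg.comp hright)
  refine tendsto_of_tendsto_of_tendsto_of_le_of_le hlower hupper (fun y => ?_) (fun y => ?_)
  · rw [tsub_le_iff_right, add_comm]
    simpa using hsub (x - y) y
  · rw [add_comm]
    simpa using hsub (y - x) x

theorem ENNReal.ofReal_rpow_half (a : ℝ) : ENNReal.ofReal a ^ (1/2 : ℝ) = ENNReal.ofReal √a := by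
  rcases le_total 0 a with ha | ha
  · rw [Real.sqrt_eq_rpow, ENNReal.ofReal_rpow_of_nonneg ha (by norm_num)]
  · simp [ENNReal.ofReal_of_nonpos ha, Real.sqrt_eq_zero'.2 ha]

theorem iSup_ofReal_rpow_half_add_le {ι E : Type*} [Add E] {f : ι → E → ℝ}
    (hf : ∀ i ξ η, √(f i (ξ + η)) ≤ √(f i ξ) + √(f i η)) (ξ η : E) :
    (⨆ i, ENNReal.ofReal (f i (ξ + η))) ^ (1/2 : ℝ) ≤
      (⨆ i, ENNReal.ofReal (f i ξ)) ^ (1/2 : ℝ) + (⨆ i, ENNReal.ofReal (f i η)) ^ (1/2 : ℝ) := by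
  rw [one_div, ENNReal.rpow_inv_le_iff two_pos]
  refine iSup_le fun i => ?_
  rw [← ENNReal.rpow_inv_le_iff two_pos, ← one_div, ENNReal.ofReal_rpow_half]
  calc ENNReal.ofReal √(f i (ξ + η)) ≤ ENNReal.ofReal √(f i ξ) + ENNReal.ofReal √(f i η) :=
        (ENNReal.ofReal_le_ofReal (hf i ξ η)).trans ENNReal.ofReal_add_le
    _ ≤ _ := by
        simp only [← ENNReal.ofReal_rpow_half]
        gcongr <;> exact le_iSup (fun i => ENNReal.ofReal (f i _)) i

section SqrtSubadditive

variable {E : Type*} [NormedAddCommGroup E] {F : E → ℝ≥0∞}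

theorem continuous_of_sqrt_subadditive
    (hsub : ∀ ξ η, F (ξ + η) ^ (1/2 : ℝ) ≤ F ξ ^ (1/2 : ℝ) + F η ^ (1/2 : ℝ))
    (h0 : Tendsto F (𝓝 0) (𝓝 0)) : Continuous F := by
  have hsqrt : Continuous fun ξ => F ξ ^ (1/2 : ℝ) :=
    ENNReal.continuous_of_subadditive hsub <| by
      simpa [Function.comp_def] using ((ENNReal.continuous_rpow_const (y := 1/2)).tendsto 0).comp h0
  convert (ENNReal.continuous_rpow_const (y := 2)).comp hsqrt using 1
  ext ξ
  rw [Function.comp_apply, ← ENNReal.rpow_mul]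
  norm_num

theorem le_sub_of_sqrt_subadditive
    (hsub : ∀ ξ η, F (ξ + η) ^ (1/2 : ℝ) ≤ F ξ ^ (1/2 : ℝ) + F η ^ (1/2 : ℝ))
    (heven : ∀ ξ, F (-ξ) = F ξ) {a : E} (ha : F a = 0) (ξ : E) : F (ξ - a) ≤ F ξ := by
  rw [← ENNReal.rpow_le_rpow_iff (by norm_num : (0 : ℝ) < 1/2)]
  simpa [sub_eq_add_neg, heven, ha] using hsub ξ (-a)

variable [ProperSpace E] [MeasurableSpace E] [BorelSpace E] {μ : Measure E}
  [μ.IsAddRightInvariant] [IsFiniteMeasureOnCompacts μ]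

theorem setLIntegral_inv_closedBall_ne_top
    (hsub : ∀ ξ η, F (ξ + η) ^ (1/2 : ℝ) ≤ F ξ ^ (1/2 : ℝ) + F η ^ (1/2 : ℝ))
    (heven : ∀ ξ, F (-ξ) = F ξ) (h0 : Tendsto F (𝓝 0) (𝓝 0)) {ρ : ℝ} (hρ : 0 ≤ ρ)
    (hfin : ∫⁻ ξ in closedBall 0 (2 * ρ), (F ξ)⁻¹ ∂μ ≠ ∞) (a : E) :
    ∫⁻ ξ in closedBall a ρ, (F ξ)⁻¹ ∂μ ≠ ∞ := by
  have hF := continuous_of_sqrt_subadditive hsub h0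
  obtain ⟨b, hb, hmin⟩ := (isCompact_closedBall a ρ).exists_isMinOn
    (nonempty_closedBall.2 hρ) hF.continuousOn
  by_cases hFb : F b = 0
  · set B := closedBall (0 : E) (2 * ρ)
    have hle : ∀ ξ ∈ closedBall a ρ, (F ξ)⁻¹ ≤ B.indicator (fun ξ => (F ξ)⁻¹) (ξ - b) := by
      intro ξ hξ
      have hξb : ξ - b ∈ B := by
        rw [mem_closedBall, dist_zero_right, two_mul]
        calc ‖ξ - b‖ ≤ dist ξ a + dist b a := by
              rw [← dist_eq_norm]; exact dist_triangle_right ξ b a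
          _ ≤ ρ + ρ := add_le_add hξ hb
      rw [Set.indicator_of_mem hξb]
      exact ENNReal.inv_le_inv.2 (le_sub_of_sqrt_subadditive hsub heven hFb ξ)
    refine ne_top_of_le_ne_top hfin ?_
    calc ∫⁻ ξ in closedBall a ρ, (F ξ)⁻¹ ∂μ
        ≤ ∫⁻ ξ in closedBall a ρ, B.indicator (fun ξ => (F ξ)⁻¹) (ξ - b) ∂μ :=
          setLIntegral_mono' measurableSet_closedBall hle
      _ ≤ ∫⁻ ξ, B.indicator (fun ξ => (F ξ)⁻¹) (ξ - b) ∂μ := setLIntegral_le_lintegral _ _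
      _ = ∫⁻ ξ in B, (F ξ)⁻¹ ∂μ := by
          rw [lintegral_sub_right_eq_self, lintegral_indicator measurableSet_closedBall]
  · refine ne_top_of_le_ne_top (ENNReal.mul_ne_top (ENNReal.inv_ne_top.2 hFb)
      ((isCompact_closedBall a ρ).measure_lt_top (μ := μ)).ne) ?_
    calc ∫⁻ ξ in closedBall a ρ, (F ξ)⁻¹ ∂μ ≤ ∫⁻ _ in closedBall a ρ, (F b)⁻¹ ∂μ :=
          setLIntegral_mono' measurableSet_closedBall fun ξ hξ => ENNReal.inv_le_inv.2 (hmin hξ)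
      _ = (F b)⁻¹ * μ (closedBall a ρ) := setLIntegral_const _ _

theorem setLIntegral_inv_ball_ne_top
    (hsub : ∀ ξ η, F (ξ + η) ^ (1/2 : ℝ) ≤ F ξ ^ (1/2 : ℝ) + F η ^ (1/2 : ℝ))
    (heven : ∀ ξ, F (-ξ) = F ξ) (h0 : Tendsto F (𝓝 0) (𝓝 0)) {ε : ℝ} (hε : 0 < ε)
    (hfin : ∫⁻ ξ in ball 0 ε, (F ξ)⁻¹ ∂μ ≠ ∞) (r : ℝ) :
    ∫⁻ ξ in ball 0 r, (F ξ)⁻¹ ∂μ ≠ ∞ := by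
  have hloc (a : E) : ∫⁻ ξ in closedBall a (ε / 3), (F ξ)⁻¹ ∂μ ≠ ∞ :=
    setLIntegral_inv_closedBall_ne_top hsub heven h0 (by positivity)
      (ne_top_of_le_ne_top hfin (lintegral_mono_set (closedBall_subset_ball (by linarith)))) a
  have : IsLocallyFiniteMeasure (μ.withDensity fun ξ => (F ξ)⁻¹) :=
    ⟨fun a => ⟨closedBall a (ε / 3), closedBall_mem_nhds a (by positivity), by
      rw [withDensity_apply _ measurableSet_closedBall]; exact (hloc a).lt_top⟩⟩
  rw [← withDensity_apply _ measurableSet_ball]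
  exact ((measure_mono ball_subset_closedBall).trans_lt
    (isCompact_closedBall 0 r).measure_lt_top).ne

end SqrtSubadditive

theorem stmt1 (d : ℕ)
    (q : EuclideanSpace ℝ (Fin d) → EuclideanSpace ℝ (Fin d) → ℂ)
    -- (a) subadditivity and evenness, for each frozen x
    (hsub_abs : ∀ x ξ η, Real.sqrt (‖q x (ξ + η)‖) ≤
      Real.sqrt (‖q x ξ‖) + Real.sqrt (‖q x η‖))
    (heven_abs : ∀ x ξ, ‖q x (-ξ)‖ = ‖q x ξ‖)
    (heven_re : ∀ x ξ, (q x (-ξ)).re = (q x ξ).re)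
    -- (b) sup_x |q(x,ξ)| → 0 as ξ → 0
    (hlim : Tendsto (fun ξ => ⨆ x, ENNReal.ofReal (‖q x ξ‖))
      (𝓝 (0 : EuclideanSpace ℝ (Fin d))) (𝓝 0))
    -- (d) √I is subadditive
    (hIsub : ∀ ξ η : EuclideanSpace ℝ (Fin d),
      ((⨅ x, ENNReal.ofReal ((q x (ξ + η)).re)) ^ (1/2 : ℝ)) ≤
        ((⨅ x, ENNReal.ofReal ((q x ξ).re)) ^ (1/2 : ℝ)) +
        ((⨅ x, ENNReal.ofReal ((q x η).re)) ^ (1/2 : ℝ))) :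
    ((∃ r > (0 : ℝ), ∫⁻ ξ in Metric.ball (0 : EuclideanSpace ℝ (Fin d)) r,
        (⨆ x, ENNReal.ofReal (‖q x ξ‖))⁻¹ = ∞) →
      ∀ r > (0 : ℝ), ∫⁻ ξ in Metric.ball (0 : EuclideanSpace ℝ (Fin d)) r,
        (⨆ x, ENNReal.ofReal (‖q x ξ‖))⁻¹ = ∞) ∧
    ((∃ r > (0 : ℝ), ∫⁻ ξ in Metric.ball (0 : EuclideanSpace ℝ (Fin d)) r,
        (⨅ x, ENNReal.ofReal ((q x ξ).re))⁻¹ < ∞) →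
      ∀ r > (0 : ℝ), ∫⁻ ξ in Metric.ball (0 : EuclideanSpace ℝ (Fin d)) r,
        (⨅ x, ENNReal.ofReal ((q x ξ).re))⁻¹ < ∞) := by
  set S := fun ξ => ⨆ x, ENNReal.ofReal ‖q x ξ‖
  set I := fun ξ => ⨅ x, ENNReal.ofReal (q x ξ).re
  have hSsub := iSup_ofReal_rpow_half_add_le (f := fun x ξ => ‖q x ξ‖) hsub_abs
  have hSeven (ξ) : S (-ξ) = S ξ := by simp only [S, heven_abs]
  have hIeven (ξ) : I (-ξ) = I ξ := by simp only [I, heven_re]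
  have hIS (ξ) : I ξ ≤ S ξ :=
    iInf_le_of_le 0 <|
      (ENNReal.ofReal_le_ofReal (Complex.re_le_norm _)).trans (le_iSup_of_le 0 le_rfl)
  have hI0 : Tendsto I (𝓝 0) (𝓝 0) :=
    tendsto_of_tendsto_of_tendsto_of_le_of_le tendsto_const_nhds hlim (fun _ => zero_le) hIS
  refine ⟨fun ⟨r₀, _, hr₀⟩ r hr => ?_, fun ⟨r₀, hr₀, hfin⟩ r _ => ?_⟩
  · by_contra hfin
    exact setLIntegral_inv_ball_ne_top hSsub hSeven hlim hr hfin r₀ hr₀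
  · exact (setLIntegral_inv_ball_ne_top hIsub hIeven hI0 hr₀ hfin.ne r).lt_top
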